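/- Let B > 0, L > 0 and r ∈ (0, 2], and let ρ, τ : ℕ × ℕ → ℂ both belong to the class R(B, r, L). Then there exist a constant C_B > 0 depending only on B, r, L, and N₀ ∈ ℕ, such that for all natural numbers N ≥ N₀, ∑_{(j,k) : j ≥ N or k ≥ N} |ρ_{j,k} − τ_{j,k}|² ≤ C_B · N^{2−r/2} · e^{−2B N^{r/2}} (in particular this tail series converges). -/

import Mathlib

/-!
Since `‖ρ - τ‖² ≤ 4L² e^{-2B(j+k)^t}` with `t = r/2`, and the tail `{j ≥ N ∨ k ≥ N}` lies in
`{j + k ≥ N}`, where the antidiagonal `j + k = n` has `n + 1` points, it suffices to bound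
`∑_{n ≥ N} (n + 1) e^{-2B n^t}`. For `Φ(x) = x^{2-t} e^{-2B x^t}` one has
`-Φ'(x) ≥ B t x e^{-2B x^t}` for large `x`, so by the mean value theorem each term is at most a
constant multiple of `Φ(n) - Φ(n + 1)`, and the sum telescopes to `O(Φ(N))`.
-/

/-- The class `R(B, r, L)` of density matrices with exponentially decaying entries:
`|ρ_{j,k}| ≤ L exp(-B (j+k)^{r/2})`. -/
def inClassR (B r L : ℝ) (ρ : ℕ × ℕ → ℂ) : Prop :=
  ∀ j k : ℕ, ‖ρ (j, k)‖ ≤ L * Real.exp (-B * ((j + k : ℕ) : ℝ) ^ (r / 2))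

open Real Set Filter Finset

theorem hasDerivAt_rpow_mul_exp_neg_mul_rpow {a t x : ℝ} (hx : 0 < x) :
    HasDerivAt (fun y => y ^ (2 - t) * exp (-a * y ^ t))
      (exp (-a * x ^ t) * ((2 - t) * x ^ (1 - t) - a * t * x)) x := by
  have hpow : HasDerivAt (fun y => y ^ (2 - t)) ((2 - t) * x ^ (1 - t)) x := by
    simpa [show 2 - t - 1 = 1 - t by ring] using
      hasDerivAt_rpow_const (p := 2 - t) (Or.inl hx.ne')
  have hexp : HasDerivAt (fun y => exp (-a * y ^ t))
      (exp (-a * x ^ t) * (-a * (t * x ^ (t - 1)))) x :=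
    ((hasDerivAt_rpow_const (p := t) (Or.inl hx.ne')).const_mul (-a)).exp
  refine (hpow.mul hexp).congr_deriv ?_
  have hmul : x ^ (2 - t) * x ^ (t - 1) = x := by
    rw [← rpow_add hx]; norm_num
  linear_combination (-(a * t) * exp (-a * x ^ t)) * hmul

theorem mul_exp_neg_mul_rpow_le_neg_deriv {a t c : ℝ} (ha : 0 < a) (ht : 0 < t) (hc : 0 < c)
    (hct : 2 * (2 - t) / (a * t) ≤ c ^ t) :
    a * t / 2 * (c * exp (-a * c ^ t)) ≤
      -(exp (-a * c ^ t) * ((2 - t) * c ^ (1 - t) - a * t * c)) := by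
  have hsplit : c ^ (1 - t) * c ^ t = c := by rw [← rpow_add hc]; norm_num
  have hsmall : (2 - t) * c ^ (1 - t) ≤ a * t / 2 * c := by
    calc (2 - t) * c ^ (1 - t) ≤ a * t / 2 * c ^ t * c ^ (1 - t) := by
          gcongr
          rw [div_le_iff₀ (by positivity)] at hct
          linarith
      _ = a * t / 2 * c := by rw [mul_assoc, mul_comm (c ^ t), hsplit]
  nlinarith [exp_pos (-a * c ^ t)]

theorem succ_mul_exp_neg_mul_rpow_le {a t x : ℝ} (ha : 0 < a) (ht : 0 < t) (ht1 : t ≤ 1)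
    (hx : 1 ≤ x) (hxt : 2 * (2 - t) / (a * t) ≤ x ^ t) :
    (x + 1) * exp (-a * x ^ t) ≤ 4 * exp a / (a * t) *
      (x ^ (2 - t) * exp (-a * x ^ t) - (x + 1) ^ (2 - t) * exp (-a * (x + 1) ^ t)) := by
  have hx0 : 0 < x := by linarith
  obtain ⟨c, ⟨hxc, hcx⟩, hc⟩ := exists_hasDerivAt_eq_slope
    (fun y => y ^ (2 - t) * exp (-a * y ^ t))
    (fun y => exp (-a * y ^ t) * ((2 - t) * y ^ (1 - t) - a * t * y)) (lt_add_one x)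
    (fun y hy => (hasDerivAt_rpow_mul_exp_neg_mul_rpow (hx0.trans_le hy.1)).continuousAt
      |>.continuousWithinAt)
    (fun y hy => hasDerivAt_rpow_mul_exp_neg_mul_rpow (hx0.trans hy.1))
  rw [add_sub_cancel_left, div_one] at hc
  have hc0 : 0 < c := hx0.trans hxc
  have hxc_t : x ^ t ≤ c ^ t := rpow_le_rpow hx0.le hxc.le ht.le
  have hcx_t : c ^ t ≤ (x + 1) ^ t := rpow_le_rpow hc0.le hcx.le ht.le
  have hsucc_t : (x + 1) ^ t ≤ x ^ t + 1 := by
    simpa using rpow_add_le_add_rpow hx0.le zero_le_one ht.le ht1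
  have hshift : (x + 1) * exp (-a * x ^ t) ≤ 2 * exp a * (c * exp (-a * c ^ t)) := by
    calc (x + 1) * exp (-a * x ^ t) ≤ (2 * c) * (exp a * exp (-a * c ^ t)) := by
          gcongr
          · linarith
          · rw [← exp_add]; gcongr; nlinarith
      _ = 2 * exp a * (c * exp (-a * c ^ t)) := by ring
  have hderiv := mul_exp_neg_mul_rpow_le_neg_deriv ha ht hc0 (hxt.trans hxc_t)
  rw [hc] at hderiv
  calc (x + 1) * exp (-a * x ^ t) ≤ 2 * exp a * (c * exp (-a * c ^ t)) := hshift
    _ = 4 * exp a / (a * t) * (a * t / 2 * (c * exp (-a * c ^ t))) := by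
        field_simp; ring
    _ ≤ _ := by gcongr; linarith

theorem summable_and_tsum_le_of_le_sub {f F : ℕ → ℝ} {N : ℕ} (hf : 0 ≤ f) (hF : 0 ≤ F)
    (hf_lt : ∀ n < N, f n = 0) (hf_le : ∀ n, N ≤ n → f n ≤ F n - F (n + 1)) :
    Summable f ∧ ∑' n, f n ≤ F N := by
  have hpartial : ∀ M, ∑ n ∈ range M, f n ≤ F N := by
    intro M
    calc ∑ n ∈ range M, f n ≤ ∑ n ∈ range (N + M), f n :=
          sum_le_sum_of_subset_of_nonneg (range_subset_range.2 (Nat.le_add_left M N))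
            fun n _ _ => hf n
      _ = ∑ k ∈ range M, f (N + k) := by
          rw [sum_range_add, sum_eq_zero fun n hn => hf_lt n (mem_range.1 hn), zero_add]
      _ ≤ ∑ k ∈ range M, (F (N + k) - F (N + k + 1)) :=
          sum_le_sum fun k _ => hf_le _ (Nat.le_add_right N k)
      _ = F N - F (N + M) := sum_range_sub' (fun k => F (N + k)) M
      _ ≤ F N := sub_le_self _ (hF _)
  exact ⟨summable_of_sum_range_le hf hpartial, Real.tsum_le_of_sum_range_le hf hpartial⟩

theorem hasSum_comp_fst_add_snd {f : ℕ → ℝ} {s : ℝ} (hf : 0 ≤ f)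
    (h : HasSum (fun n : ℕ => (n + 1) * f n) s) :
    HasSum (fun p : ℕ × ℕ => f (p.1 + p.2)) s := by
  rw [← HasAntidiagonal.sigmaAntidiagonalEquivProd.hasSum_iff]
  have hfiber : ∀ n, HasSum (fun q : antidiagonal n => f ((q : ℕ × ℕ).1 + (q : ℕ × ℕ).2))
      ((n + 1) * f n) := by
    intro n
    convert hasSum_fintype (fun q : antidiagonal n => f ((q : ℕ × ℕ).1 + (q : ℕ × ℕ).2)) using 1
    rw [Finset.sum_coe_sort (antidiagonal n) (fun q => f (q.1 + q.2)),
      sum_congr rfl fun q hq => by rw [mem_antidiagonal.1 hq], sum_const,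
      Nat.card_antidiagonal, nsmul_eq_mul]
    push_cast; ring
  have hsummable : Summable fun x : Σ n : ℕ, antidiagonal n =>
      f ((x.2 : ℕ × ℕ).1 + (x.2 : ℕ × ℕ).2) :=
    (summable_sigma_of_nonneg fun _ => hf _).2
      ⟨fun n => (hfiber n).summable, by simpa only [(hfiber _).tsum_eq] using h.summable⟩
  rw [h.unique (hsummable.hasSum.sigma hfiber)]
  exact hsummable.hasSum

theorem summable_subtype_and_tsum_le_of_le_comp_add {u : ℕ × ℕ → ℝ} {g : ℕ → ℝ}
    {s : Set (ℕ × ℕ)} {c : ℝ} (hu : 0 ≤ u) (hg : 0 ≤ g) (hug : ∀ p ∈ s, u p ≤ g (p.1 + p.2))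
    (h : HasSum (fun n : ℕ => (n + 1) * g n) c) :
    Summable (fun p : s => u p) ∧ ∑' p : s, u p ≤ c := by
  have hG := hasSum_comp_fst_add_snd hg h
  have hGs : Summable fun p : s => g ((p : ℕ × ℕ).1 + (p : ℕ × ℕ).2) := hG.summable.subtype s
  have hus : Summable fun p : s => u p :=
    Summable.of_nonneg_of_le (fun p => hu p) (fun p => hug p p.2) hGs
  refine ⟨hus, ?_⟩
  calc ∑' p : s, u p ≤ ∑' p : s, g ((p : ℕ × ℕ).1 + (p : ℕ × ℕ).2) :=
        hus.tsum_le_tsum (fun p => hug p p.2) hGs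
    _ ≤ ∑' p : ℕ × ℕ, g (p.1 + p.2) :=
        hG.summable.tsum_subtype_le (fun p : ℕ × ℕ => g (p.1 + p.2)) s fun _ => hg _
    _ = c := hG.tsum_eq

theorem norm_sub_sq_le_of_inClassR {B r L : ℝ} {ρ τ : ℕ × ℕ → ℂ} (hρ : inClassR B r L ρ)
    (hτ : inClassR B r L τ) (p : ℕ × ℕ) :
    ‖ρ p - τ p‖ ^ 2 ≤ 4 * L ^ 2 * exp (-2 * B * ((p.1 + p.2 : ℕ) : ℝ) ^ (r / 2)) := by
  set y : ℝ := ((p.1 + p.2 : ℕ) : ℝ) ^ (r / 2)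
  have h : ‖ρ p - τ p‖ ≤ 2 * (L * exp (-B * y)) := by
    linarith [norm_sub_le (ρ p) (τ p), hρ p.1 p.2, hτ p.1 p.2]
  calc ‖ρ p - τ p‖ ^ 2 ≤ (2 * (L * exp (-B * y))) ^ 2 := pow_le_pow_left₀ (norm_nonneg _) h 2
    _ = 4 * L ^ 2 * exp (-2 * B * y) := by
        rw [show -2 * B * y = -B * y + -B * y by ring, exp_add]; ring

/-- If `ρ, τ ∈ R(B, r, L)` then there exist `C_B > 0` (depending only on `B, r, L`) and `N₀`
such that for all `N ≥ N₀`, the tail sum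
`∑_{(j,k) : j ≥ N ∨ k ≥ N} |ρ_{j,k} − τ_{j,k}|²` converges and is at most
`C_B N^{2−r/2} e^{−2B N^{r/2}}`. -/
theorem tail_bias_bound (B L r : ℝ) (hB : 0 < B) (hL : 0 < L) (hr : r ∈ Set.Ioc (0 : ℝ) 2)
    (ρ τ : ℕ × ℕ → ℂ) (hρ : inClassR B r L ρ) (hτ : inClassR B r L τ) :
    ∃ C : ℝ, 0 < C ∧ ∃ N₀ : ℕ, ∀ N : ℕ, N₀ ≤ N →
      Summable (fun p : {p : ℕ × ℕ // N ≤ p.1 ∨ N ≤ p.2} =>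
        ‖ρ (p : ℕ × ℕ) - τ (p : ℕ × ℕ)‖ ^ 2) ∧
      ∑' p : {p : ℕ × ℕ // N ≤ p.1 ∨ N ≤ p.2},
        ‖ρ (p : ℕ × ℕ) - τ (p : ℕ × ℕ)‖ ^ 2
      ≤ C * (N : ℝ) ^ (2 - r / 2) * Real.exp (-2 * B * (N : ℝ) ^ (r / 2)) := by
  obtain ⟨hr0, hr2⟩ := hr
  have ht : 0 < r / 2 := by linarith
  have ht1 : r / 2 ≤ 1 := by linarith
  set C := 4 * L ^ 2 * (4 * exp (2 * B) / (2 * B * (r / 2)))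
  set G : ℕ → ℝ := fun n => 4 * L ^ 2 * exp (-2 * B * (n : ℝ) ^ (r / 2))
  obtain ⟨N₀, hN₀⟩ := eventually_atTop.1 <| (eventually_ge_atTop 1).and <|
    ((tendsto_rpow_atTop ht).comp tendsto_natCast_atTop_atTop).eventually_ge_atTop
      (2 * (2 - r / 2) / (2 * B * (r / 2)))
  refine ⟨C, by positivity, N₀, fun N hN => ?_⟩
  have hstep : ∀ n, N ≤ n → (n + 1 : ℝ) * (Ici N).indicator G n ≤
      C * (n : ℝ) ^ (2 - r / 2) * exp (-2 * B * (n : ℝ) ^ (r / 2)) -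
        C * ((n + 1 : ℕ) : ℝ) ^ (2 - r / 2) * exp (-2 * B * ((n + 1 : ℕ) : ℝ) ^ (r / 2)) := by
    intro n hn
    obtain ⟨hn1, hnt⟩ := hN₀ n (hN.trans hn)
    have := succ_mul_exp_neg_mul_rpow_le (a := 2 * B) (by positivity) ht ht1
      (Nat.one_le_cast.2 hn1) hnt
    rw [indicator_of_mem (Set.mem_Ici.2 hn)]
    simp only [G, C, neg_mul, Nat.cast_add, Nat.cast_one] at this ⊢
    nlinarith [this, sq_nonneg L]
  obtain ⟨hsum, hle⟩ := summable_and_tsum_le_of_le_sub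
    (F := fun n => C * (n : ℝ) ^ (2 - r / 2) * exp (-2 * B * (n : ℝ) ^ (r / 2)))
    (fun n => mul_nonneg (by positivity) (indicator_nonneg (fun n _ => by positivity) n))
    (fun n => by positivity) (fun n hn => by simp [Set.notMem_Ici.2 hn]) hstep
  refine (summable_subtype_and_tsum_le_of_le_comp_add (s := {p | N ≤ p.1 ∨ N ≤ p.2})
    (u := fun p => ‖ρ p - τ p‖ ^ 2) (fun p => by positivity)
    (indicator_nonneg fun n _ => by positivity) (fun p hp => ?_) hsum.hasSum).imp_right
    (·.trans hle)
  rw [indicator_of_mem (Set.mem_Ici.2 (by rcases hp with hp | hp <;> omega))]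
  exact norm_sub_sq_le_of_inClassR hρ hτ p
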